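/- arXiv:2004.04839 — 4 statements merged into one kernel-verified Lean document; each statement's English description precedes it below -/
import Mathlib

section
/- (Theorem 1, Carleman estimate.) Let a, T̃ > 0 and α ∈ (0,1/2). There exist constants C > 0 and λ₀ ≥ 1, depending only on α, a and T̃, such that for every function w : ℝ × ℝ → ℝ which is C² on an open neighborhood of the closed rectangle [0,a] × [0,T̃] and satisfies w(0,t) = 0 and w_x(0,t) = 0 for all t ∈ [0,T̃], and for every λ ≥ λ₀, one has ∫_Ω (w_xx − 2 w_xt)² ψ_λ dx dt ≥ C ∫_Ω [λ (w_x² + w_t²) + λ³ w²] ψ_λ dx dt + C ∫₀ᵃ [λ w_x(x,0)² + λ³ w(x,0)²] e^{−2λx} dx − C e^{−2λαT̃} ∫₀ᵃ [λ w_x(x,T̃)² + λ³ w(x,T̃)²] dx. -/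
/-!
Write `P = ∂ₓ - 2∂ₜ`, `β = 1 - 2α` and `μ = λβ`; then `w_xx - 2w_xt = P w_x`, and `∂ₓ (P w) = P w_x`
by symmetry of second derivatives. For `v` vanishing on `x = 0`, the integral of `∂ₓ(v² ψ_λ)` over
the rectangle is `∫ v(a,t)² ψ_λ ≥ 0` and that of `∂ₜ(v² ψ_λ)` is the difference of the boundary
terms at `t = T̃` and `t = 0`. The integrand of `½∂ₓ(v² ψ_λ) - ∂ₜ(v² ψ_λ)` is `(v Pv - μ v²) ψ_λ`, so
`2μ v Pv ≤ μ² v² + (Pv)²` gives the transport estimate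
`2μ ∫ v(x,0)² e^{-2λx} + μ² ∫ v² ψ_λ ≤ 2μ e^{-2λαT̃} ∫ v(x,T̃)² + ∫ (Pv)² ψ_λ`,
while `∂ₓ` alone and `2λ v v_x ≤ λ² v² + v_x²` give the Hardy inequality `λ² ∫ v² ψ_λ ≤ ∫ v_x² ψ_λ`.
Apply the transport estimate to `w_x` and `w`, the Hardy inequality to `w` and `P w`, and use
`w_x² + w_t² ≤ (3 w_x² + (P w)²) / 2`: once `λβ ≥ 5`, the term `μ² ∫ w_x² ψ_λ` absorbs all other
interior terms, which gives the estimate with `C = β / 2`.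
-/

open MeasureTheory Set

/-- Partial derivative in the first variable. -/
noncomputable def partialX (f : ℝ × ℝ → ℝ) : ℝ × ℝ → ℝ :=
  fun p => deriv (fun x => f (x, p.2)) p.1

/-- Partial derivative in the second variable. -/
noncomputable def partialT (f : ℝ × ℝ → ℝ) : ℝ × ℝ → ℝ :=
  fun p => deriv (fun t => f (p.1, t)) p.2

/-- The Carleman weight ψ_λ(x,t) = exp(−2λ(x + αt)). -/
noncomputable def carlemanWeight (α lam : ℝ) : ℝ × ℝ → ℝ :=
  fun p => Real.exp (-2 * lam * (p.1 + α * p.2))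

section Partials

variable {f : ℝ × ℝ → ℝ} {p : ℝ × ℝ}

theorem HasFDerivAt.hasDerivAt_fst_slice {L : ℝ × ℝ →L[ℝ] ℝ} (h : HasFDerivAt f L p) :
    HasDerivAt (fun x => f (x, p.2)) (L (1, 0)) p.1 :=
  h.comp_hasDerivAt p.1 ((hasDerivAt_id p.1).prodMk (hasDerivAt_const p.1 p.2))

theorem HasFDerivAt.hasDerivAt_snd_slice {L : ℝ × ℝ →L[ℝ] ℝ} (h : HasFDerivAt f L p) :
    HasDerivAt (fun t => f (p.1, t)) (L (0, 1)) p.2 :=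
  h.comp_hasDerivAt p.2 ((hasDerivAt_const p.2 p.1).prodMk (hasDerivAt_id p.2))

theorem HasFDerivAt.partialX_eq {L : ℝ × ℝ →L[ℝ] ℝ} (h : HasFDerivAt f L p) :
    partialX f p = L (1, 0) :=
  h.hasDerivAt_fst_slice.deriv

theorem HasFDerivAt.partialT_eq {L : ℝ × ℝ →L[ℝ] ℝ} (h : HasFDerivAt f L p) :
    partialT f p = L (0, 1) :=
  h.hasDerivAt_snd_slice.deriv

theorem DifferentiableAt.hasDerivAt_partialX (h : DifferentiableAt ℝ f p) :
    HasDerivAt (fun x => f (x, p.2)) (partialX f p) p.1 := by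
  simpa only [h.hasFDerivAt.partialX_eq] using h.hasFDerivAt.hasDerivAt_fst_slice

theorem DifferentiableAt.hasDerivAt_partialT (h : DifferentiableAt ℝ f p) :
    HasDerivAt (fun t => f (p.1, t)) (partialT f p) p.2 := by
  simpa only [h.hasFDerivAt.partialT_eq] using h.hasFDerivAt.hasDerivAt_snd_slice

theorem ContDiffOn.partialX_of_isOpen {U : Set (ℝ × ℝ)} {m n : WithTop ℕ∞} (hf : ContDiffOn ℝ n f U)
    (hU : IsOpen U) (hmn : m + 1 ≤ n) : ContDiffOn ℝ m (partialX f) U :=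
  ((hf.fderiv_of_isOpen hU hmn).clm_apply contDiffOn_const).congr fun _ hq =>
    (((hf.contDiffAt (hU.mem_nhds hq)).differentiableAt
      (by rintro rfl; simp at hmn)).hasFDerivAt).partialX_eq

theorem ContDiffOn.partialT_of_isOpen {U : Set (ℝ × ℝ)} {m n : WithTop ℕ∞} (hf : ContDiffOn ℝ n f U)
    (hU : IsOpen U) (hmn : m + 1 ≤ n) : ContDiffOn ℝ m (partialT f) U :=
  ((hf.fderiv_of_isOpen hU hmn).clm_apply contDiffOn_const).congr fun _ hq =>
    (((hf.contDiffAt (hU.mem_nhds hq)).differentiableAt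
      (by rintro rfl; simp at hmn)).hasFDerivAt).partialT_eq

theorem ContDiffAt.eventually_differentiableAt (hf : ContDiffAt ℝ 2 f p) :
    ∀ᶠ q in nhds p, DifferentiableAt ℝ f q :=
  (hf.eventually (by simp)).mono fun _ hq => hq.differentiableAt (by norm_num)

theorem ContDiffAt.hasFDerivAt_fderiv_apply (hf : ContDiffAt ℝ 2 f p) (v : ℝ × ℝ) :
    HasFDerivAt (fun q => fderiv ℝ f q v)
      ((ContinuousLinearMap.apply ℝ ℝ v).comp (fderiv ℝ (fderiv ℝ f) p)) p :=
  (ContinuousLinearMap.apply ℝ ℝ v).hasFDerivAt.comp p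
    ((hf.fderiv_right (m := 1) (by norm_num)).differentiableAt one_ne_zero).hasFDerivAt

theorem ContDiffAt.partialX_partialT (hf : ContDiffAt ℝ 2 f p) :
    partialX (partialT f) p = partialT (partialX f) p := by
  have hX := (hf.hasFDerivAt_fderiv_apply (1, 0)).congr_of_eventuallyEq
    (hf.eventually_differentiableAt.mono fun _ hq => hq.hasFDerivAt.partialX_eq)
  have hT := (hf.hasFDerivAt_fderiv_apply (0, 1)).congr_of_eventuallyEq
    (hf.eventually_differentiableAt.mono fun _ hq => hq.hasFDerivAt.partialT_eq)
  rw [hT.partialX_eq, hX.partialT_eq]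
  exact hf.isSymmSndFDerivAt (by simp) _ _

end Partials

structure HasContinuousPartialsOn (v vx vt : ℝ × ℝ → ℝ) (s : Set (ℝ × ℝ)) : Prop where
  continuousOn : ContinuousOn v s
  continuousOn_partialX : ContinuousOn vx s
  continuousOn_partialT : ContinuousOn vt s
  hasDerivAt_fst : ∀ p ∈ s, HasDerivAt (fun x => v (x, p.2)) (vx p) p.1
  hasDerivAt_snd : ∀ p ∈ s, HasDerivAt (fun t => v (p.1, t)) (vt p) p.2

theorem HasContinuousPartialsOn.mono {v vx vt : ℝ × ℝ → ℝ} {s t : Set (ℝ × ℝ)}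
    (h : HasContinuousPartialsOn v vx vt s) (hts : t ⊆ s) : HasContinuousPartialsOn v vx vt t :=
  ⟨h.continuousOn.mono hts, h.continuousOn_partialX.mono hts, h.continuousOn_partialT.mono hts,
    fun p hp => h.hasDerivAt_fst p (hts hp), fun p hp => h.hasDerivAt_snd p (hts hp)⟩

theorem ContDiffOn.hasContinuousPartialsOn {f : ℝ × ℝ → ℝ} {U : Set (ℝ × ℝ)} {n : WithTop ℕ∞}
    (hf : ContDiffOn ℝ n f U) (hU : IsOpen U) (hn : 1 ≤ n) :
    HasContinuousPartialsOn f (partialX f) (partialT f) U where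
  continuousOn := hf.continuousOn
  continuousOn_partialX := (hf.partialX_of_isOpen hU (m := 0) (by simpa using hn)).continuousOn
  continuousOn_partialT := (hf.partialT_of_isOpen hU (m := 0) (by simpa using hn)).continuousOn
  hasDerivAt_fst p hp := ((hf.differentiableOn (by rintro rfl; simp at hn) p hp).differentiableAt
    (hU.mem_nhds hp)).hasDerivAt_partialX
  hasDerivAt_snd p hp := ((hf.differentiableOn (by rintro rfl; simp at hn) p hp).differentiableAt
    (hU.mem_nhds hp)).hasDerivAt_partialT

theorem integral_const_mul_add_const_mul {X : Type*} [MeasurableSpace X] {μ : Measure X}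
    {f g : X → ℝ} (c d : ℝ) (hf : Integrable f μ) (hg : Integrable g μ) :
    ∫ x, (c * f x + d * g x) ∂μ = c * ∫ x, f x ∂μ + d * ∫ x, g x ∂μ := by
  rw [integral_add (hf.const_mul c) (hg.const_mul d), integral_const_mul, integral_const_mul]

section Rectangle

variable {a b c d : ℝ}

theorem ContinuousOn.integrableOn_Ioo_prod_Ioo {f : ℝ × ℝ → ℝ}
    (hf : ContinuousOn f (Icc a b ×ˢ Icc c d)) : IntegrableOn f (Ioo a b ×ˢ Ioo c d) :=
  (hf.integrableOn_compact (isCompact_Icc.prod isCompact_Icc)).mono_set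
    (prod_mono Ioo_subset_Icc_self Ioo_subset_Icc_self)

theorem ContinuousOn.integrableOn_Ioo {f : ℝ → ℝ} (hf : ContinuousOn f (Icc a b)) :
    IntegrableOn f (Ioo a b) :=
  hf.integrableOn_Icc.mono_set Ioo_subset_Icc_self

theorem integral_Ioo_eq_sub_of_hasDerivAt {f f' : ℝ → ℝ} (hab : a ≤ b)
    (hf : ∀ x ∈ Icc a b, HasDerivAt f (f' x) x) (hf' : ContinuousOn f' (Icc a b)) :
    ∫ x in Ioo a b, f' x = f b - f a := by
  rw [← integral_Ioc_eq_integral_Ioo, ← intervalIntegral.integral_of_le hab]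
  exact intervalIntegral.integral_eq_sub_of_hasDerivAt (by rwa [uIcc_of_le hab])
    (hf'.intervalIntegrable_of_Icc hab)

theorem integral_Ioo_prod_Ioo_eq_of_hasDerivAt_fst {F G : ℝ × ℝ → ℝ} (hab : a ≤ b)
    (hF : ∀ p ∈ Icc a b ×ˢ Icc c d, HasDerivAt (fun x => F (x, p.2)) (G p) p.1)
    (hG : ContinuousOn G (Icc a b ×ˢ Icc c d)) :
    ∫ p in Ioo a b ×ˢ Ioo c d, G p = ∫ t in Ioo c d, (F (b, t) - F (a, t)) := by
  have hGswap : IntegrableOn (G ∘ Prod.swap) (Ioo c d ×ˢ Ioo a b) :=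
    (hG.comp continuous_swap.continuousOn fun _ hp => hp.symm).integrableOn_Ioo_prod_Ioo
  rw [Measure.volume_eq_prod] at hGswap ⊢
  rw [← setIntegral_prod_swap]
  refine (setIntegral_prod _ hGswap).trans ?_
  refine setIntegral_congr_fun measurableSet_Ioo fun t ht => ?_
  exact integral_Ioo_eq_sub_of_hasDerivAt (f := fun x => F (x, t)) hab
    (fun x hx => hF (x, t) ⟨hx, Ioo_subset_Icc_self ht⟩)
    (hG.comp (continuous_id.prodMk continuous_const).continuousOn
      fun x hx => ⟨hx, Ioo_subset_Icc_self ht⟩)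

theorem integral_Ioo_prod_Ioo_eq_of_hasDerivAt_snd {F G : ℝ × ℝ → ℝ} (hcd : c ≤ d)
    (hF : ∀ p ∈ Icc a b ×ˢ Icc c d, HasDerivAt (fun t => F (p.1, t)) (G p) p.2)
    (hG : ContinuousOn G (Icc a b ×ˢ Icc c d)) :
    ∫ p in Ioo a b ×ˢ Ioo c d, G p = ∫ x in Ioo a b, (F (x, d) - F (x, c)) := by
  have hG' := hG.integrableOn_Ioo_prod_Ioo
  rw [Measure.volume_eq_prod] at hG' ⊢
  rw [setIntegral_prod _ hG']
  refine setIntegral_congr_fun measurableSet_Ioo fun x hx => ?_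
  exact integral_Ioo_eq_sub_of_hasDerivAt (f := fun t => F (x, t)) hcd
    (fun t ht => hF (x, t) ⟨Ioo_subset_Icc_self hx, ht⟩)
    (hG.comp (continuous_const.prodMk continuous_id).continuousOn
      fun t ht => ⟨Ioo_subset_Icc_self hx, ht⟩)

theorem ContinuousOn.slice_fst {f : ℝ × ℝ → ℝ} {s t : Set ℝ} {y : ℝ}
    (hf : ContinuousOn f (s ×ˢ t)) (hy : y ∈ t) : ContinuousOn (fun x => f (x, y)) s :=
  hf.uncurry_right (f := Function.curry f) y hy

end Rectangle

theorem HasDerivAt.eq_zero_of_eqOn_Icc {f : ℝ → ℝ} {f' t c d : ℝ} (hf : HasDerivAt f f' t)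
    (hcd : c < d) (ht : t ∈ Icc c d) (h0 : ∀ s ∈ Icc c d, f s = 0) : f' = 0 :=
  (uniqueDiffOn_Icc hcd t ht).eq_deriv _ hf.hasDerivWithinAt
    ((hasDerivWithinAt_const t _ 0).congr h0 (h0 t ht))

section Weight

variable {α lam : ℝ}

theorem carlemanWeight_pos (p : ℝ × ℝ) : 0 < carlemanWeight α lam p := Real.exp_pos _

@[fun_prop]
theorem continuous_carlemanWeight : Continuous (carlemanWeight α lam) := by
  unfold carlemanWeight; fun_prop

theorem carlemanWeight_mk_zero (x : ℝ) : carlemanWeight α lam (x, 0) = Real.exp (-2 * lam * x) := by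
  simp [carlemanWeight]

theorem integral_sq_mul_carlemanWeight_nonneg {s : Set (ℝ × ℝ)} (f : ℝ × ℝ → ℝ) :
    0 ≤ ∫ p in s, f p ^ 2 * carlemanWeight α lam p :=
  integral_nonneg fun p => mul_nonneg (sq_nonneg _) (carlemanWeight_pos p).le

theorem carlemanWeight_le {x t : ℝ} (hlam : 0 ≤ lam) (hx : 0 ≤ x) :
    carlemanWeight α lam (x, t) ≤ Real.exp (-2 * lam * α * t) :=
  Real.exp_le_exp.2 (by nlinarith)

theorem hasDerivAt_carlemanWeight_fst (p : ℝ × ℝ) :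
    HasDerivAt (fun x => carlemanWeight α lam (x, p.2))
      (-2 * lam * carlemanWeight α lam p) p.1 := by
  have := ((((hasDerivAt_id p.1).add_const (α * p.2)).const_mul (-2 * lam))).exp
  simpa [carlemanWeight, mul_comm] using this

theorem hasDerivAt_carlemanWeight_snd (p : ℝ × ℝ) :
    HasDerivAt (fun t => carlemanWeight α lam (p.1, t))
      (-2 * lam * α * carlemanWeight α lam p) p.2 := by
  have := ((((hasDerivAt_id p.2).const_mul α).const_add p.1).const_mul (-2 * lam)).exp
  simpa [carlemanWeight, mul_comm, mul_left_comm, mul_assoc] using this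

end Weight

section Energy

variable {a T α lam : ℝ} {v vx vt : ℝ × ℝ → ℝ}

theorem hasDerivAt_sq_mul_carlemanWeight_fst {p : ℝ × ℝ}
    (h : HasDerivAt (fun x => v (x, p.2)) (vx p) p.1) :
    HasDerivAt (fun x => v (x, p.2) ^ 2 * carlemanWeight α lam (x, p.2))
      ((2 * v p * vx p - 2 * lam * v p ^ 2) * carlemanWeight α lam p) p.1 := by
  refine ((h.fun_pow 2).fun_mul
    (hasDerivAt_carlemanWeight_fst (α := α) (lam := lam) p)).congr_deriv ?_
  simp only [Prod.mk.eta]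
  ring

theorem hasDerivAt_sq_mul_carlemanWeight_snd {p : ℝ × ℝ}
    (h : HasDerivAt (fun t => v (p.1, t)) (vt p) p.2) :
    HasDerivAt (fun t => v (p.1, t) ^ 2 * carlemanWeight α lam (p.1, t))
      ((2 * v p * vt p - 2 * lam * α * v p ^ 2) * carlemanWeight α lam p) p.2 := by
  refine ((h.fun_pow 2).fun_mul
    (hasDerivAt_carlemanWeight_snd (α := α) (lam := lam) p)).congr_deriv ?_
  simp only [Prod.mk.eta]
  ring

theorem integral_deriv_fst_sq_mul_carlemanWeight_nonneg (ha : 0 ≤ a)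
    (hv : ContinuousOn v (Icc 0 a ×ˢ Icc 0 T)) (hvx : ContinuousOn vx (Icc 0 a ×ˢ Icc 0 T))
    (hderiv : ∀ p ∈ Icc 0 a ×ˢ Icc 0 T, HasDerivAt (fun x => v (x, p.2)) (vx p) p.1)
    (hv0 : ∀ t ∈ Icc 0 T, v (0, t) = 0) :
    0 ≤ ∫ p in Ioo 0 a ×ˢ Ioo 0 T,
      (2 * v p * vx p - 2 * lam * v p ^ 2) * carlemanWeight α lam p := by
  rw [integral_Ioo_prod_Ioo_eq_of_hasDerivAt_fst (F := fun p => v p ^ 2 * carlemanWeight α lam p) ha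
    (fun p hp => hasDerivAt_sq_mul_carlemanWeight_fst (hderiv p hp))
    (by fun_prop)]
  refine setIntegral_nonneg measurableSet_Ioo fun t ht => ?_
  simp only [hv0 t (Ioo_subset_Icc_self ht), zero_pow two_ne_zero, zero_mul, sub_zero]
  exact mul_nonneg (sq_nonneg _) (carlemanWeight_pos _).le

theorem weighted_hardy (ha : 0 ≤ a) (hlam : 0 ≤ lam)
    (hv : ContinuousOn v (Icc 0 a ×ˢ Icc 0 T)) (hvx : ContinuousOn vx (Icc 0 a ×ˢ Icc 0 T))
    (hderiv : ∀ p ∈ Icc 0 a ×ˢ Icc 0 T, HasDerivAt (fun x => v (x, p.2)) (vx p) p.1)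
    (hv0 : ∀ t ∈ Icc 0 T, v (0, t) = 0) :
    lam ^ 2 * ∫ p in Ioo 0 a ×ˢ Ioo 0 T, v p ^ 2 * carlemanWeight α lam p
      ≤ ∫ p in Ioo 0 a ×ˢ Ioo 0 T, vx p ^ 2 * carlemanWeight α lam p := by
  have hG := integral_deriv_fst_sq_mul_carlemanWeight_nonneg (α := α) (lam := lam) ha hv hvx
    hderiv hv0
  have hmul : lam * ∫ p in Ioo 0 a ×ˢ Ioo 0 T,
        (2 * v p * vx p - 2 * lam * v p ^ 2) * carlemanWeight α lam p
      ≤ (∫ p in Ioo 0 a ×ˢ Ioo 0 T, vx p ^ 2 * carlemanWeight α lam p)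
        - lam ^ 2 * ∫ p in Ioo 0 a ×ˢ Ioo 0 T, v p ^ 2 * carlemanWeight α lam p := by
    rw [← integral_const_mul, ← integral_const_mul, ← integral_sub]
    · refine setIntegral_mono_on ?_ ?_ (measurableSet_Ioo.prod measurableSet_Ioo) fun p _ => ?_
      any_goals exact (by fun_prop : ContinuousOn _ (Icc 0 a ×ˢ Icc 0 T)).integrableOn_Ioo_prod_Ioo
      nlinarith [mul_nonneg (sq_nonneg (vx p - lam * v p))
        (carlemanWeight_pos (α := α) (lam := lam) p).le]
    all_goals exact (by fun_prop : ContinuousOn _ (Icc 0 a ×ˢ Icc 0 T)).integrableOn_Ioo_prod_Ioo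
  linarith [mul_nonneg hlam hG, hmul]

theorem integral_sq_add_sq_mul_carlemanWeight_le (hvx : ContinuousOn vx (Icc 0 a ×ˢ Icc 0 T))
    (hvt : ContinuousOn vt (Icc 0 a ×ˢ Icc 0 T)) :
    ∫ p in Ioo 0 a ×ˢ Ioo 0 T, (vx p ^ 2 + vt p ^ 2) * carlemanWeight α lam p
      ≤ (3 * (∫ p in Ioo 0 a ×ˢ Ioo 0 T, vx p ^ 2 * carlemanWeight α lam p)
        + ∫ p in Ioo 0 a ×ˢ Ioo 0 T, (vx p - 2 * vt p) ^ 2 * carlemanWeight α lam p) / 2 := by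
  rw [← integral_const_mul, ← integral_add, ← integral_div]
  · refine setIntegral_mono_on ?_ ?_ (measurableSet_Ioo.prod measurableSet_Ioo) fun p _ => ?_
    any_goals exact (by fun_prop : ContinuousOn _ (Icc 0 a ×ˢ Icc 0 T)).integrableOn_Ioo_prod_Ioo
    nlinarith [mul_nonneg (sq_nonneg (vx p - vt p)) (carlemanWeight_pos (α := α) (lam := lam) p).le]
  all_goals exact (by fun_prop : ContinuousOn _ (Icc 0 a ×ˢ Icc 0 T)).integrableOn_Ioo_prod_Ioo

theorem integral_deriv_snd_sq_mul_carlemanWeight (hT : 0 ≤ T)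
    (hv : ContinuousOn v (Icc 0 a ×ˢ Icc 0 T)) (hvt : ContinuousOn vt (Icc 0 a ×ˢ Icc 0 T))
    (hderiv : ∀ p ∈ Icc 0 a ×ˢ Icc 0 T, HasDerivAt (fun t => v (p.1, t)) (vt p) p.2) :
    ∫ p in Ioo 0 a ×ˢ Ioo 0 T, (2 * v p * vt p - 2 * lam * α * v p ^ 2) * carlemanWeight α lam p
      = (∫ x in Ioo 0 a, v (x, T) ^ 2 * carlemanWeight α lam (x, T))
        - ∫ x in Ioo 0 a, v (x, 0) ^ 2 * Real.exp (-2 * lam * x) := by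
  have hF : ContinuousOn (fun p => v p ^ 2 * carlemanWeight α lam p) (Icc 0 a ×ˢ Icc 0 T) := by
    fun_prop
  rw [integral_Ioo_prod_Ioo_eq_of_hasDerivAt_snd
      (F := fun p => v p ^ 2 * carlemanWeight α lam p) hT
      (fun p hp => hasDerivAt_sq_mul_carlemanWeight_snd (hderiv p hp)) (by fun_prop),
    integral_sub (hF.slice_fst (right_mem_Icc.2 hT)).integrableOn_Ioo
      (hF.slice_fst (left_mem_Icc.2 hT)).integrableOn_Ioo]
  simp only [carlemanWeight_mk_zero]

theorem setIntegral_mul_carlemanWeight_le {f : ℝ → ℝ} (hlam : 0 ≤ lam)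
    (hf : ContinuousOn f (Icc 0 a)) (hf0 : ∀ x, 0 ≤ f x) :
    ∫ x in Ioo 0 a, f x * carlemanWeight α lam (x, T)
      ≤ Real.exp (-2 * lam * α * T) * ∫ x in Ioo 0 a, f x := by
  rw [← integral_const_mul]
  refine setIntegral_mono_on (hf.mul (by fun_prop)).integrableOn_Ioo
    (hf.integrableOn_Ioo.const_mul _) measurableSet_Ioo fun x hx => ?_
  rw [mul_comm (Real.exp _)]
  exact mul_le_mul_of_nonneg_left (carlemanWeight_le hlam hx.1.le) (hf0 x)

theorem transport_estimate (ha : 0 ≤ a) (hT : 0 ≤ T) (hlam : 0 ≤ lam) (hα : 2 * α ≤ 1)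
    (hv : HasContinuousPartialsOn v vx vt (Icc 0 a ×ˢ Icc 0 T))
    (hv0 : ∀ t ∈ Icc 0 T, v (0, t) = 0) :
    2 * (lam * (1 - 2 * α)) * (∫ x in Ioo 0 a, v (x, 0) ^ 2 * Real.exp (-2 * lam * x))
        + (lam * (1 - 2 * α)) ^ 2 * ∫ p in Ioo 0 a ×ˢ Ioo 0 T, v p ^ 2 * carlemanWeight α lam p
      ≤ 2 * (lam * (1 - 2 * α)) * Real.exp (-2 * lam * α * T) * (∫ x in Ioo 0 a, v (x, T) ^ 2)
        + ∫ p in Ioo 0 a ×ˢ Ioo 0 T, (vx p - 2 * vt p) ^ 2 * carlemanWeight α lam p := by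
  set μ := lam * (1 - 2 * α)
  have hμ : 0 ≤ μ := mul_nonneg hlam (by linarith)
  obtain ⟨hvc, hvxc, hvtc, hvx, hvt⟩ := hv
  have hGx := integral_deriv_fst_sq_mul_carlemanWeight_nonneg (α := α) (lam := lam) ha hvc hvxc
    hvx hv0
  have hGt := integral_deriv_snd_sq_mul_carlemanWeight (α := α) (lam := lam) hT hvc hvtc hvt
  have hBT := setIntegral_mul_carlemanWeight_le (f := fun x => v (x, T) ^ 2) (α := α) (T := T) hlam
    ((hvc.slice_fst (right_mem_Icc.2 hT)).pow 2) fun x => sq_nonneg (v (x, T))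
  have hpt : μ * (∫ p in Ioo 0 a ×ˢ Ioo 0 T,
        (2 * v p * vx p - 2 * lam * v p ^ 2) * carlemanWeight α lam p)
      - 2 * μ * (∫ p in Ioo 0 a ×ˢ Ioo 0 T,
        (2 * v p * vt p - 2 * lam * α * v p ^ 2) * carlemanWeight α lam p)
      + μ ^ 2 * (∫ p in Ioo 0 a ×ˢ Ioo 0 T, v p ^ 2 * carlemanWeight α lam p)
      ≤ ∫ p in Ioo 0 a ×ˢ Ioo 0 T, (vx p - 2 * vt p) ^ 2 * carlemanWeight α lam p := by
    calc _ = ∫ p in Ioo 0 a ×ˢ Ioo 0 T,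
          (μ * ((2 * v p * vx p - 2 * lam * v p ^ 2) * carlemanWeight α lam p)
            - 2 * μ * ((2 * v p * vt p - 2 * lam * α * v p ^ 2) * carlemanWeight α lam p)
            + μ ^ 2 * (v p ^ 2 * carlemanWeight α lam p)) := by
          rw [integral_add, integral_sub, integral_const_mul, integral_const_mul,
            integral_const_mul]
          all_goals exact
            (by fun_prop : ContinuousOn _ (Icc 0 a ×ˢ Icc 0 T)).integrableOn_Ioo_prod_Ioo
      _ ≤ _ := by
        refine setIntegral_mono_on ?_ ?_ (measurableSet_Ioo.prod measurableSet_Ioo) fun p _ => ?_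
        any_goals exact
          (by fun_prop : ContinuousOn _ (Icc 0 a ×ˢ Icc 0 T)).integrableOn_Ioo_prod_Ioo
        -- the two sides differ by `(vx - 2 vt - μ v)² ψ`
        nlinarith [mul_nonneg (sq_nonneg (vx p - 2 * vt p - μ * v p))
          (carlemanWeight_pos (α := α) (lam := lam) p).le]
  rw [hGt] at hpt
  linarith [mul_nonneg hμ hGx, mul_le_mul_of_nonneg_left hBT (by positivity : 0 ≤ 2 * μ)]

end Energy

theorem carleman_absorption {lam β E L Jv Jx Jg Jp B0 B0x BT BTx : ℝ}
    (hlam : 1 ≤ lam) (hβ : 0 < β) (hβ1 : β ≤ 1) (hμ : 5 ≤ lam * β)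
    (hJv : 0 ≤ Jv) (hJx : 0 ≤ Jx) (hJp : 0 ≤ Jp)
    (htx : 2 * (lam * β) * B0x + (lam * β) ^ 2 * Jx ≤ 2 * (lam * β) * E * BTx + L)
    (htv : 2 * (lam * β) * B0 + (lam * β) ^ 2 * Jv ≤ 2 * (lam * β) * E * BT + Jp)
    (hhv : lam ^ 2 * Jv ≤ Jx) (hhp : lam ^ 2 * Jp ≤ L) (hJg : Jg ≤ (3 * Jx + Jp) / 2) :
    β / 2 * (lam * Jg + lam ^ 3 * Jv) + β / 2 * (lam * B0x + lam ^ 3 * B0)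
      - β / 2 * E * (lam * BTx + lam ^ 3 * BT) ≤ L := by
  have hlβ : 0 ≤ lam * β := by positivity
  have htv' := mul_le_mul_of_nonneg_left htv (sq_nonneg lam)
  have hJg' := mul_le_mul_of_nonneg_left hJg hlβ
  have hhv' := mul_le_mul_of_nonneg_left hhv hlβ
  have hJp' : lam * β * Jp ≤ lam ^ 2 * Jp :=
    mul_le_mul_of_nonneg_right (by nlinarith) hJp
  have hJx' : 5 * (lam * β) * Jx ≤ (lam * β) ^ 2 * Jx :=
    mul_le_mul_of_nonneg_right (by nlinarith) hJx
  linarith [mul_nonneg (sq_nonneg (lam ^ 2 * β)) hJv, mul_nonneg (sq_nonneg lam) hJp]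

theorem carleman_estimate_of_hasContinuousPartialsOn {a T α lam : ℝ}
    {v vx vt vxx vxt : ℝ × ℝ → ℝ} (ha : 0 ≤ a) (hT : 0 < T) (hα : α ∈ Ioo (0 : ℝ) (1 / 2))
    (hlam : 1 ≤ lam) (hμ : 5 ≤ lam * (1 - 2 * α))
    (hv : HasContinuousPartialsOn v vx vt (Icc 0 a ×ˢ Icc 0 T))
    (hvx : HasContinuousPartialsOn vx vxx vxt (Icc 0 a ×ˢ Icc 0 T))
    (hvt : ∀ p ∈ Icc 0 a ×ˢ Icc 0 T, HasDerivAt (fun x => vt (x, p.2)) (vxt p) p.1)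
    (hbc : ∀ t ∈ Icc 0 T, v (0, t) = 0 ∧ vx (0, t) = 0) :
    (1 - 2 * α) / 2 * (∫ p in Ioo 0 a ×ˢ Ioo 0 T,
        (lam * (vx p ^ 2 + vt p ^ 2) + lam ^ 3 * v p ^ 2) * carlemanWeight α lam p)
      + (1 - 2 * α) / 2 * (∫ x in Ioo 0 a,
        (lam * vx (x, 0) ^ 2 + lam ^ 3 * v (x, 0) ^ 2) * Real.exp (-2 * lam * x))
      - (1 - 2 * α) / 2 * Real.exp (-2 * lam * α * T) * (∫ x in Ioo 0 a,
        (lam * vx (x, T) ^ 2 + lam ^ 3 * v (x, T) ^ 2))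
    ≤ ∫ p in Ioo 0 a ×ˢ Ioo 0 T, (vxx p - 2 * vxt p) ^ 2 * carlemanWeight α lam p := by
  have hlam0 : 0 ≤ lam := zero_le_one.trans hlam
  have hα1 : 2 * α ≤ 1 := by linarith [hα.2]
  have hvt0 : ∀ t ∈ Icc 0 T, vt (0, t) = 0 := fun t ht =>
    (hv.hasDerivAt_snd (0, t) ⟨left_mem_Icc.2 ha, ht⟩).eq_zero_of_eqOn_Icc hT ht
      fun s hs => (hbc s hs).1
  have hvc := hv.continuousOn
  have hvxc := hv.continuousOn_partialX
  have hvtc := hv.continuousOn_partialT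
  have hvxxc := hvx.continuousOn_partialX
  have hvxtc := hvx.continuousOn_partialT
  have htx := transport_estimate ha hT.le hlam0 hα1 hvx fun t ht => (hbc t ht).2
  have htv := transport_estimate ha hT.le hlam0 hα1 hv fun t ht => (hbc t ht).1
  have hhv := weighted_hardy (α := α) ha hlam0 hvc hvxc hv.hasDerivAt_fst fun t ht => (hbc t ht).1
  have hhp := weighted_hardy (α := α) (v := fun p => vx p - 2 * vt p) ha hlam0 (by fun_prop)
    (by fun_prop : ContinuousOn (fun p => vxx p - 2 * vxt p) _)
    (fun p hp => (hvx.hasDerivAt_fst p hp).sub ((hvt p hp).const_mul 2))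
    fun t ht => by simp [(hbc t ht).2, hvt0 t ht]
  have hJg := integral_sq_add_sq_mul_carlemanWeight_le (α := α) (lam := lam) hvxc hvtc
  have hA : ∫ p in Ioo 0 a ×ˢ Ioo 0 T,
        (lam * (vx p ^ 2 + vt p ^ 2) + lam ^ 3 * v p ^ 2) * carlemanWeight α lam p
      = lam * (∫ p in Ioo 0 a ×ˢ Ioo 0 T, (vx p ^ 2 + vt p ^ 2) * carlemanWeight α lam p)
        + lam ^ 3 * ∫ p in Ioo 0 a ×ˢ Ioo 0 T, v p ^ 2 * carlemanWeight α lam p := by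
    simp only [add_mul _ _ (carlemanWeight α lam _), mul_assoc]
    exact integral_const_mul_add_const_mul _ _
      (by fun_prop : ContinuousOn _ (Icc 0 a ×ˢ Icc 0 T)).integrableOn_Ioo_prod_Ioo
      (by fun_prop : ContinuousOn _ (Icc 0 a ×ˢ Icc 0 T)).integrableOn_Ioo_prod_Ioo
  have h0 : (0 : ℝ) ∈ Icc 0 T := left_mem_Icc.2 hT.le
  have hTT : T ∈ Icc 0 T := right_mem_Icc.2 hT.le
  have hB : ∫ x in Ioo 0 a,
        (lam * vx (x, 0) ^ 2 + lam ^ 3 * v (x, 0) ^ 2) * Real.exp (-2 * lam * x)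
      = lam * (∫ x in Ioo 0 a, vx (x, 0) ^ 2 * Real.exp (-2 * lam * x))
        + lam ^ 3 * ∫ x in Ioo 0 a, v (x, 0) ^ 2 * Real.exp (-2 * lam * x) := by
    simp only [add_mul, mul_assoc]
    exact integral_const_mul_add_const_mul _ _
      (((hvxc.slice_fst h0).pow 2).mul (by fun_prop)).integrableOn_Ioo
      (((hvc.slice_fst h0).pow 2).mul (by fun_prop)).integrableOn_Ioo
  have hD : ∫ x in Ioo 0 a, (lam * vx (x, T) ^ 2 + lam ^ 3 * v (x, T) ^ 2)
      = lam * (∫ x in Ioo 0 a, vx (x, T) ^ 2) + lam ^ 3 * ∫ x in Ioo 0 a, v (x, T) ^ 2 :=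
    integral_const_mul_add_const_mul _ _ ((hvxc.slice_fst hTT).pow 2).integrableOn_Ioo
      ((hvc.slice_fst hTT).pow 2).integrableOn_Ioo
  rw [hA, hB, hD]
  exact carleman_absorption hlam (by linarith [hα.2]) (by linarith [hα.1]) hμ
    (integral_sq_mul_carlemanWeight_nonneg v) (integral_sq_mul_carlemanWeight_nonneg vx)
    (integral_sq_mul_carlemanWeight_nonneg _) htx htv hhv hhp hJg

/-- Theorem 1 (Carleman estimate). -/
theorem carleman_estimate (a T : ℝ) (ha : 0 < a) (hT : 0 < T)
    (α : ℝ) (hα : α ∈ Set.Ioo (0 : ℝ) (1 / 2)) :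
    ∃ C : ℝ, 0 < C ∧ ∃ lam₀ : ℝ, 1 ≤ lam₀ ∧
      ∀ w : ℝ × ℝ → ℝ,
        (∃ U : Set (ℝ × ℝ), IsOpen U ∧ Icc (0 : ℝ) a ×ˢ Icc (0 : ℝ) T ⊆ U ∧
          ContDiffOn ℝ 2 w U) →
        (∀ t ∈ Icc (0 : ℝ) T, w (0, t) = 0 ∧ partialX w (0, t) = 0) →
        ∀ lam : ℝ, lam₀ ≤ lam →
          (∫ p in Ioo (0 : ℝ) a ×ˢ Ioo (0 : ℝ) T,
              (partialX (partialX w) p - 2 * partialT (partialX w) p) ^ 2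
                * carlemanWeight α lam p)
          ≥ C * (∫ p in Ioo (0 : ℝ) a ×ˢ Ioo (0 : ℝ) T,
                (lam * ((partialX w p) ^ 2 + (partialT w p) ^ 2) + lam ^ 3 * (w p) ^ 2)
                  * carlemanWeight α lam p)
            + C * (∫ x in Ioo (0 : ℝ) a,
                (lam * (partialX w (x, 0)) ^ 2 + lam ^ 3 * (w (x, 0)) ^ 2)
                  * Real.exp (-2 * lam * x))
            - C * Real.exp (-2 * lam * α * T) * (∫ x in Ioo (0 : ℝ) a,
                (lam * (partialX w (x, T)) ^ 2 + lam ^ 3 * (w (x, T)) ^ 2)) := by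
  have hβ : 0 < 1 - 2 * α := by linarith [hα.2]
  refine ⟨(1 - 2 * α) / 2, by positivity, max 1 (5 / (1 - 2 * α)), le_max_left _ _, ?_⟩
  rintro w ⟨U, hU, hRU, hw⟩ hbc lam hlam
  have hwx := hw.partialX_of_isOpen hU (m := 1) le_rfl
  have hwt := hw.partialT_of_isOpen hU (m := 1) le_rfl
  have hwtx : ∀ p ∈ Icc 0 a ×ˢ Icc 0 T,
      HasDerivAt (fun x => partialT w (x, p.2)) (partialT (partialX w) p) p.1 := fun p hp => by
    rw [← (hw.contDiffAt (hU.mem_nhds (hRU hp))).partialX_partialT]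
    exact ((hwt.contDiffAt (hU.mem_nhds (hRU hp))).differentiableAt one_ne_zero).hasDerivAt_partialX
  exact carleman_estimate_of_hasContinuousPartialsOn ha.le hT hα (le_of_max_le_left hlam)
    ((div_le_iff₀ hβ).1 (le_of_max_le_right hlam))
    ((hw.hasContinuousPartialsOn hU one_le_two).mono hRU)
    ((hwx.hasContinuousPartialsOn hU le_rfl).mono hRU) hwtx hbc
end

section
/- (Liouville change of variables, reduction (2.3) → (2.9).) Let c : ℝ → ℝ be three times continuously differentiable with c(y) ≥ 1 for all y. Define φ(y) = ∫₀ʸ √(c(s)) ds and let g : ℝ → ℝ satisfy φ(g(x)) = x and g(φ(y)) = y for all x, y ∈ ℝ. Let u : ℝ × ℝ → ℝ be C² and satisfy c(y)·u_tt(y,t) = u_yy(y,t) for all (y,t) ∈ ℝ². Define S(x) = (c(g(x)))^{−1/4}, v(x,t) = u(g(x),t)·(c(g(x)))^{1/4}, and r(x) = S''(x)/S(x) − 2·(S'(x)/S(x))². Then v_tt(x,t) = v_xx(x,t) + r(x)·v(x,t) for all (x,t) ∈ ℝ². -/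
open Set

/-! With `h = c ^ (-1/4)` we have `S = h ∘ g` and `g' = 1 / √(c ∘ g) = S ^ 2`, so `g` solves the
autonomous equation `g' = h(g) ^ 2` and is therefore `C²`, and so is `S`. Writing
`v(·, t) = U ∘ g / S` with `U = u(·, t)`, two differentiations give
`v_xx = U''(g) S³ - r v`, and the wave equation `U''(g) = c(g) u_tt(g, t)` together with
`c(g) S³ = S⁻¹` turns `U''(g) S³` into `v_tt`. -/

theorem hasDerivAt_of_integral_rightInverse {f g : ℝ → ℝ} (hf : Continuous f)
    (hf0 : ∀ y, 0 < f y) (hg : ∀ x, ∫ s in (0 : ℝ)..g x, f s = x) (x : ℝ) :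
    HasDerivAt g (f (g x))⁻¹ x := by
  set φ : ℝ → ℝ := fun y => ∫ s in (0 : ℝ)..y, f s
  have hφ : ∀ y, HasDerivAt φ (f y) y := fun y => (hf.integral_hasStrictDerivAt 0 y).hasDerivAt
  have hφmono : StrictMono φ := strictMono_of_deriv_pos fun y => (hφ y).deriv ▸ hf0 y
  have hgmono : StrictMono g := fun a b hab => hφmono.lt_iff_lt.mp (by simpa only [φ, hg] using hab)
  have hgsurj : g.Surjective := fun y => ⟨φ y, hφmono.injective (hg (φ y))⟩
  exact (hφ (g x)).of_local_left_inverse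
    (hgmono.monotone.continuous_of_surjective hgsurj).continuousAt (hf0 _).ne' (.of_forall hg)

theorem contDiff_succ_of_hasDerivAt_comp {F g : ℝ → ℝ} {n : ℕ} (hF : ContDiff ℝ n F)
    (hg : ∀ x, HasDerivAt g (F (g x)) x) : ContDiff ℝ (n + 1) g := by
  have hdiff : Differentiable ℝ g := fun x => (hg x).differentiableAt
  have hderiv : deriv g = F ∘ g := funext fun x => (hg x).deriv
  induction n with
  | zero => exact contDiff_one_iff_deriv.2 ⟨hdiff, hderiv ▸ hF.continuous.comp hdiff.continuous⟩
  | succ n ih =>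
    exact contDiff_succ_iff_deriv.2 ⟨hdiff, by simp, hderiv ▸ hF.comp (ih hF.of_succ)⟩

theorem ContDiff.hasDerivAt_deriv {f : ℝ → ℝ} (hf : ContDiff ℝ 2 f) (x : ℝ) :
    HasDerivAt (deriv f) (deriv (deriv f) x) x :=
  ((contDiff_succ_iff_deriv.1 hf).2.2.differentiable one_ne_zero x).hasDerivAt

theorem deriv_deriv_comp_div {U g S : ℝ → ℝ} (hU : ContDiff ℝ 2 U) (hS : ContDiff ℝ 2 S)
    (hS0 : ∀ x, S x ≠ 0) (hg : ∀ x, HasDerivAt g (S x ^ 2) x) (x : ℝ) :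
    deriv (deriv fun z => U (g z) / S z) x =
      deriv (deriv U) (g x) * S x ^ 3 -
        (deriv (deriv S) x / S x - 2 * (deriv S x / S x) ^ 2) * (U (g x) / S x) := by
  have hU1 : ∀ y, HasDerivAt U (deriv U y) y :=
    fun y => (hU.differentiable two_ne_zero y).hasDerivAt
  have hS1 : ∀ y, HasDerivAt S (deriv S y) y :=
    fun y => (hS.differentiable two_ne_zero y).hasDerivAt
  have hfirst : deriv (fun z => U (g z) / S z) =
      fun z => deriv U (g z) * S z - U (g z) * deriv S z / S z ^ 2 := by
    funext z
    have hz : HasDerivAt (fun z => U (g z) / S z) _ z :=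
      ((hU1 (g z)).comp z (hg z)).div (hS1 z) (hS0 z)
    rw [hz.deriv, Function.comp_apply]
    field_simp [hS0 z]
  have hsecond : HasDerivAt (fun z => deriv U (g z) * S z - U (g z) * deriv S z / S z ^ 2) _ x :=
    (((hU.hasDerivAt_deriv (g x)).comp x (hg x)).mul (hS1 x)).sub
      ((((hU1 (g x)).comp x (hg x)).mul (hS.hasDerivAt_deriv x)).div ((hS1 x).pow 2)
        (pow_ne_zero 2 (hS0 x)))
  rw [hfirst, hsecond.deriv]
  simp only [Function.comp_apply, Pi.mul_apply]
  field_simp [hS0 x]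
  ring

theorem inv_sqrt_eq_rpow_neg_quarter_sq {a : ℝ} (ha : 0 < a) :
    (Real.sqrt a)⁻¹ = (a ^ (-(1 / 4) : ℝ)) ^ 2 := by
  rw [← Real.rpow_natCast, ← Real.rpow_mul ha.le, Real.sqrt_eq_rpow, ← Real.rpow_neg ha.le]
  norm_num

theorem mul_rpow_neg_quarter_pow_three {a : ℝ} (ha : 0 < a) :
    a * (a ^ (-(1 / 4) : ℝ)) ^ 3 = a ^ (1 / 4 : ℝ) := by
  rw [← Real.rpow_natCast, ← Real.rpow_mul ha.le]
  nth_rewrite 1 [← Real.rpow_one a]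
  rw [← Real.rpow_add ha]
  norm_num

theorem liouville_reduction_general
    (c : ℝ → ℝ) (hc : ContDiff ℝ 3 c) (hc1 : ∀ y : ℝ, 1 ≤ c y)
    (g : ℝ → ℝ)
    (hg1 : ∀ x : ℝ, (∫ s in (0:ℝ)..(g x), Real.sqrt (c s)) = x)
    (u : ℝ × ℝ → ℝ) (hu : ContDiff ℝ 2 u)
    (hwave : ∀ p : ℝ × ℝ, c p.1 * partialT (partialT u) p = partialX (partialX u) p)
    (S : ℝ → ℝ) (hS : ∀ x : ℝ, S x = (c (g x)) ^ (-(1/4) : ℝ))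
    (v : ℝ × ℝ → ℝ)
    (hv : ∀ p : ℝ × ℝ, v p = u (g p.1, p.2) * (c (g p.1)) ^ ((1/4) : ℝ))
    (r : ℝ → ℝ)
    (hr : ∀ x : ℝ, r x = deriv (deriv S) x / S x - 2 * (deriv S x / S x) ^ 2) :
    ∀ p : ℝ × ℝ, partialT (partialT v) p = partialX (partialX v) p + r p.1 * v p := by
  have hcpos : ∀ y, 0 < c y := fun y => one_pos.trans_le (hc1 y)
  set h : ℝ → ℝ := fun y => c y ^ (-(1 / 4) : ℝ)
  have hh : ContDiff ℝ 2 h := (hc.of_le (by norm_num)).rpow_const_of_ne fun y => (hcpos y).ne'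
  have hgh : ∀ x, HasDerivAt g (h (g x) ^ 2) x := fun x => by
    simpa only [inv_sqrt_eq_rpow_neg_quarter_sq (hcpos _)] using
      hasDerivAt_of_integral_rightInverse hc.continuous.sqrt
        (fun y => Real.sqrt_pos.2 (hcpos y)) hg1 x
  have hSg : S = h ∘ g := funext hS
  have hS2 : ContDiff ℝ 2 S := hSg ▸ hh.comp
    (contDiff_succ_of_hasDerivAt_comp (n := 1) ((hh.of_le one_le_two).pow 2) hgh)
  rintro ⟨x, t⟩
  have htime : partialT (partialT v) (x, t) =
      partialT (partialT u) (g x, t) * c (g x) ^ (1 / 4 : ℝ) := by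
    show deriv (deriv fun s => v (x, s)) t = _
    simp only [hv, deriv_mul_const_field']
    rfl
  have hspace : (fun z => v (z, t)) = fun z => u (g z, t) / S z := by
    funext z
    rw [hv, hS, Real.rpow_neg (hcpos _).le, div_inv_eq_mul]
  have hvxx := deriv_deriv_comp_div (U := fun y => u (y, t))
    (hu.comp (contDiff_id.prodMk contDiff_const)) hS2
    (fun y => hS y ▸ (Real.rpow_pos_of_pos (hcpos _) _).ne')
    (fun y => by rw [hS]; exact hgh y) x
  change _ = deriv (deriv fun z => v (z, t)) x + r x * v (x, t)
  rw [htime, hspace, hvxx, ← hr, ← congrFun hspace x]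
  change _ = partialX (partialX u) (g x, t) * S x ^ 3 - _ + _
  rw [← hwave (g x, t), hS, ← mul_rpow_neg_quarter_pow_three (hcpos (g x))]
  ring

/-- Liouville change of variables: reduction of c(y)u_tt = u_yy to
    v_tt = v_xx + r(x) v via the travel-time variable x = ∫₀ʸ √c. -/
theorem liouville_reduction
    (c : ℝ → ℝ) (hc : ContDiff ℝ 3 c) (hc1 : ∀ y : ℝ, 1 ≤ c y)
    (g : ℝ → ℝ)
    (hg1 : ∀ x : ℝ, (∫ s in (0:ℝ)..(g x), Real.sqrt (c s)) = x)
    (hg2 : ∀ y : ℝ, g (∫ s in (0:ℝ)..y, Real.sqrt (c s)) = y)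
    (u : ℝ × ℝ → ℝ) (hu : ContDiff ℝ 2 u)
    (hwave : ∀ p : ℝ × ℝ, c p.1 * partialT (partialT u) p = partialX (partialX u) p)
    (S : ℝ → ℝ) (hS : ∀ x : ℝ, S x = (c (g x)) ^ (-(1/4) : ℝ))
    (v : ℝ × ℝ → ℝ)
    (hv : ∀ p : ℝ × ℝ, v p = u (g p.1, p.2) * (c (g p.1)) ^ ((1/4) : ℝ))
    (r : ℝ → ℝ)
    (hr : ∀ x : ℝ, r x = deriv (deriv S) x / S x - 2 * (deriv S x / S x) ^ 2) :
    ∀ p : ℝ × ℝ, partialT (partialT v) p = partialX (partialX v) p + r p.1 * v p :=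
  liouville_reduction_general c hc hc1 g hg1 u hu hwave S hS v hv r hr
end

section
/- (Recovery formula (3.3).) Let r : ℝ → ℝ and let w : ℝ × ℝ → ℝ be C² and satisfy w_xx(x,t) − 2·w_xt(x,t) = −r(x)·w(x,t) for all (x,t) ∈ ℝ², and w(x,0) = 1/2 for all x ∈ ℝ. Then r(x) = 4·w_xt(x,0) for every x ∈ ℝ. -/
open Set

/-- Recovery formula (3.3): r(x) = 4 w_xt(x,0). -/
theorem recovery_formula
    (r : ℝ → ℝ) (w : ℝ × ℝ → ℝ) (hw : ContDiff ℝ 2 w)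
    (hpde : ∀ p : ℝ × ℝ,
      partialX (partialX w) p - 2 * partialT (partialX w) p = -(r p.1) * w p)
    (hinit : ∀ x : ℝ, w (x, 0) = 1 / 2) :
    ∀ x : ℝ, r x = 4 * partialT (partialX w) (x, 0) := by
  intro x
  have hX0 : ∀ y : ℝ, partialX w (y, 0) = 0 := by
    intro y
    have : (fun x => w (x, (0:ℝ))) = fun _ => (1/2 : ℝ) := funext hinit
    simp [partialX, this]
  have hXX0 : partialX (partialX w) (x, 0) = 0 := by
    have h1 : (fun y : ℝ => partialX w (y, 0)) = fun _ => (0:ℝ) := funext hX0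
    show deriv (fun y => partialX w (y, 0)) x = 0
    rw [h1]; simp
  have h := hpde (x, 0)
  rw [hXX0, hinit x] at h
  linarith
end

section
/- (Derivation of the quasilinear equation with non-local term (3.4).) Let r : ℝ → ℝ and let w : ℝ × ℝ → ℝ be C³ and satisfy w_xx(x,t) − 2·w_xt(x,t) = −r(x)·w(x,t) for all (x,t) ∈ ℝ², and w(x,0) = 1/2 for all x ∈ ℝ. Define q = w_t (the t-partial derivative of w). Then q is C² and satisfies q_xx(x,t) − 2·q_xt(x,t) + 4·q_x(x,0)·q(x,t) = 0 for all (x,t) ∈ ℝ². -/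
open Set

/-! Differentiating the equation in `t` and commuting mixed partials shows that `q = w_t` solves
`q_xx − 2 q_xt = −r q`. On `t = 0` we have `w ≡ 1/2`, so `w_xx = 0` there and the equation for `w`
reads `−2 q_x(x,0) = −r(x)/2`, i.e. `r = 4 q_x(·,0)`; substituting this eliminates `r`. -/

lemma partialX_eq_fderiv {f : ℝ × ℝ → ℝ} (hf : Differentiable ℝ f) :
    partialX f = fun p => fderiv ℝ f p (1, 0) := by
  funext p
  have hline : HasDerivAt (fun x : ℝ => (x, p.2)) (1, 0) p.1 :=
    (hasDerivAt_id p.1).prodMk (hasDerivAt_const p.1 p.2)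
  exact ((hf p).hasFDerivAt.comp_hasDerivAt p.1 hline).deriv

lemma partialT_eq_fderiv {f : ℝ × ℝ → ℝ} (hf : Differentiable ℝ f) :
    partialT f = fun p => fderiv ℝ f p (0, 1) := by
  funext p
  have hline : HasDerivAt (fun t : ℝ => (p.1, t)) (0, 1) p.2 :=
    (hasDerivAt_const p.2 p.1).prodMk (hasDerivAt_id p.2)
  exact ((hf p).hasFDerivAt.comp_hasDerivAt p.2 hline).deriv

lemma contDiff_partialX {f : ℝ × ℝ → ℝ} {n : WithTop ℕ∞} (hf : ContDiff ℝ (n + 1) f) :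
    ContDiff ℝ n (partialX f) := by
  rw [partialX_eq_fderiv (hf.differentiable (by simp))]
  exact (hf.fderiv_right le_rfl).clm_apply contDiff_const

lemma contDiff_partialT {f : ℝ × ℝ → ℝ} {n : WithTop ℕ∞} (hf : ContDiff ℝ (n + 1) f) :
    ContDiff ℝ n (partialT f) := by
  rw [partialT_eq_fderiv (hf.differentiable (by simp))]
  exact (hf.fderiv_right le_rfl).clm_apply contDiff_const

lemma partialT_partialX_comm {f : ℝ × ℝ → ℝ} (hf : ContDiff ℝ 2 f) :
    partialT (partialX f) = partialX (partialT f) := by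
  have hd : Differentiable ℝ f := hf.differentiable two_ne_zero
  have hd2 : Differentiable ℝ (fderiv ℝ f) :=
    (hf.fderiv_right (m := 1) le_rfl).differentiable one_ne_zero
  have hdv (v : ℝ × ℝ) : Differentiable ℝ (fun q => fderiv ℝ f q v) :=
    hd2.clm_apply (differentiable_const v)
  rw [partialX_eq_fderiv hd, partialT_eq_fderiv hd, partialT_eq_fderiv (hdv _),
    partialX_eq_fderiv (hdv _)]
  funext p
  rw [fderiv_clm_apply (hd2 p) (differentiableAt_const _),
    fderiv_clm_apply (hd2 p) (differentiableAt_const _)]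
  simpa using hf.contDiffAt.isSymmSndFDerivAt (by simp) (0, 1) (1, 0)

lemma partialT_sub {f g : ℝ × ℝ → ℝ} (hf : Differentiable ℝ f) (hg : Differentiable ℝ g) :
    partialT (fun p => f p - g p) = fun p => partialT f p - partialT g p := by
  rw [partialT_eq_fderiv hf, partialT_eq_fderiv hg, partialT_eq_fderiv (hf.fun_sub hg)]
  funext p
  rw [fderiv_fun_sub (hf p) (hg p)]
  rfl

lemma partialT_const_mul (c : ℝ) (f : ℝ × ℝ → ℝ) :
    partialT (fun p => c * f p) = fun p => c * partialT f p :=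
  funext fun p => congrFun (deriv_const_mul_field' c) p.2

lemma partialT_fst_mul (c : ℝ → ℝ) (f : ℝ × ℝ → ℝ) :
    partialT (fun p => c p.1 * f p) = fun p => c p.1 * partialT f p :=
  funext fun p => congrFun (deriv_const_mul_field' (c p.1)) p.2

lemma partialX_eq_zero_of_eq_const {f : ℝ × ℝ → ℝ} {t c : ℝ} (h : ∀ x, f (x, t) = c) (x : ℝ) :
    partialX f (x, t) = 0 := by
  simp [partialX, h]

lemma pde_partialT {r : ℝ → ℝ} {w : ℝ × ℝ → ℝ} (hw : ContDiff ℝ 3 w)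
    (hpde : ∀ p : ℝ × ℝ,
      partialX (partialX w) p - 2 * partialT (partialX w) p = -(r p.1) * w p) (p : ℝ × ℝ) :
    partialX (partialX (partialT w)) p - 2 * partialT (partialX (partialT w)) p
      = -(r p.1) * partialT w p := by
  have hw2 : ContDiff ℝ 2 w := hw.of_le (by norm_num)
  have hA : ContDiff ℝ 2 (partialX w) := contDiff_partialX hw
  have hXA : Differentiable ℝ (partialX (partialX w)) :=
    (contDiff_partialX (n := 1) hA).differentiable one_ne_zero
  have hTA : Differentiable ℝ (partialT (partialX w)) :=
    (contDiff_partialT (n := 1) hA).differentiable one_ne_zero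
  have h := congrFun (congrArg partialT (funext hpde)) p
  rw [partialT_sub hXA (hTA.const_mul 2), partialT_const_mul,
    partialT_fst_mul (fun x => -r x)] at h
  rwa [partialT_partialX_comm hA, partialT_partialX_comm hw2] at h

lemma coeff_eq_partialX_partialT_zero {r : ℝ → ℝ} {w : ℝ × ℝ → ℝ} (hw : ContDiff ℝ 2 w)
    (hpde : ∀ p : ℝ × ℝ,
      partialX (partialX w) p - 2 * partialT (partialX w) p = -(r p.1) * w p)
    (hinit : ∀ x : ℝ, w (x, 0) = 1 / 2) (x : ℝ) :
    r x = 4 * partialX (partialT w) (x, 0) := by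
  have h := hpde (x, 0)
  rw [partialX_eq_zero_of_eq_const (partialX_eq_zero_of_eq_const hinit) x,
    partialT_partialX_comm hw, hinit x] at h
  linarith

/-- Derivation of the quasilinear equation with non-local term (3.4):
    with q = w_t one has q_xx − 2 q_xt + 4 q_x(x,0) q = 0. -/
theorem quasilinear_equation
    (r : ℝ → ℝ) (w : ℝ × ℝ → ℝ) (hw : ContDiff ℝ 3 w)
    (hpde : ∀ p : ℝ × ℝ,
      partialX (partialX w) p - 2 * partialT (partialX w) p = -(r p.1) * w p)
    (hinit : ∀ x : ℝ, w (x, 0) = 1 / 2) :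
    ContDiff ℝ 2 (partialT w) ∧
    ∀ p : ℝ × ℝ,
      partialX (partialX (partialT w)) p
        - 2 * partialT (partialX (partialT w)) p
        + 4 * partialX (partialT w) (p.1, 0) * partialT w p = 0 := by
  refine ⟨contDiff_partialT hw, fun p => ?_⟩
  have hq := pde_partialT hw hpde p
  rw [coeff_eq_partialX_partialT_zero (hw.of_le (by norm_num)) hpde hinit p.1] at hq
  linarith
end
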